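/- Let G be a graph with vertex set {v_1, …, v_n}, let 0 ≤ k ≤ n, and let H be the split graph constructed from G as in the eternal-Italian-domination reduction (with n+2 copies of V in the independent side). If f : V(H) → {0,1,2} is an Italian dominating function of H of weight at most k+1 and f(b) ≥ 1 for at least one vertex b ∈ B, then the function f_G on V(G) defined by f_G(v_i) = f(u_i) is an Italian dominating function of G of weight at most k. -/
import Mathlib


/-- The split graph `H` of the reduction from a graph `G` on vertices `v_1, …, v_n`, with `m`
copies of the vertex set on the independent side. Vertices: `Sum.inl i = u_i` (clique side
`A`), `Sum.inr (i, j) = w_i^{(j)}` (independent side `B`). Edges: `A` induces a clique, `B`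
induces an independent set, and `u_i — w_k^{(j)}` (for every `j`) iff `i = k` or `v_i ~ v_k`
in `G`. -/
def Hsplit {n : ℕ} (m : ℕ) (G : SimpleGraph (Fin n)) :
    SimpleGraph (Fin n ⊕ (Fin n × Fin m)) :=
  SimpleGraph.fromRel (fun a b =>
    match a, b with
    | Sum.inl _, Sum.inl _ => True
    | Sum.inl i, Sum.inr (k, _) => i = k ∨ G.Adj i k
    | _, _ => False)

open scoped Classical in
/-- let `0 ≤ k ≤ n`. If `f : V(H) → {0,1,2}` is an Italian dominating function
of the split graph `H` (with `n+2` copies of `V` on the independent side) of weight at most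
`k+1`, and `f(b) ≥ 1` for at least one vertex `b ∈ B`, then `f_G(v_i) = f(u_i)` is an
Italian dominating function of `G` of weight at most `k`. -/
theorem stmt_19 {n k : ℕ} (hk : k ≤ n) (G : SimpleGraph (Fin n))
    (f : Fin n ⊕ (Fin n × Fin (n + 2)) → ℕ)
    (hf2 : ∀ x, f x ≤ 2)
    (hitalian : ∀ x, f x = 0 →
      2 ≤ ∑ u ∈ Finset.univ.filter (fun u => (Hsplit (n + 2) G).Adj x u), f u)
    (hweight : ∑ x : Fin n ⊕ (Fin n × Fin (n + 2)), f x ≤ k + 1)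
    (hB : ∃ b : Fin n × Fin (n + 2), 1 ≤ f (Sum.inr b)) :
    let fG : Fin n → ℕ := fun i => f (Sum.inl i)
    (∀ i, fG i ≤ 2) ∧
    (∀ i : Fin n, fG i = 0 → 2 ≤ ∑ u ∈ Finset.univ.filter (fun u => G.Adj i u), fG u) ∧
    (∑ i : Fin n, fG i ≤ k) := by

  classical
  obtain ⟨b, hb⟩ := hB
  intro fG
  have hsum : ∑ x : Fin n ⊕ (Fin n × Fin (n + 2)), f x
      = ∑ i, f (Sum.inl i) + ∑ p : Fin n × Fin (n + 2), f (Sum.inr p) :=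
    Fintype.sum_sum_type f
  have hBsum : 1 ≤ ∑ p : Fin n × Fin (n + 2), f (Sum.inr p) :=
    le_trans hb (Finset.single_le_sum (f := fun p => f (Sum.inr p)) (fun _ _ => Nat.zero_le _) (Finset.mem_univ b))
  refine ⟨fun i => hf2 _, ?_, by simp only [fG]; omega⟩
  intro i hi
  by_cases hall : ∀ j : Fin (n + 2), 1 ≤ f (Sum.inr (i, j))
  · exfalso
    have h1 : (n + 2) ≤ ∑ j : Fin (n + 2), f (Sum.inr (i, j)) := by
      calc (n + 2) = ∑ _j : Fin (n + 2), 1 := by simp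
      _ ≤ _ := Finset.sum_le_sum (fun j _ => hall j)
    have h2 : ∑ j : Fin (n + 2), f (Sum.inr (i, j))
        ≤ ∑ p : Fin n × Fin (n + 2), f (Sum.inr p) := by
      rw [Fintype.sum_prod_type]
      exact Finset.single_le_sum (f := fun a => ∑ j, f (Sum.inr (a, j)))
        (fun _ _ => Nat.zero_le _) (Finset.mem_univ i)
    omega
  · push_neg at hall
    obtain ⟨j, hj⟩ := hall
    have hj0 : f (Sum.inr (i, j)) = 0 := by omega
    have h2 := hitalian _ hj0
    have hadj1 : ∀ a : Fin n,
        (Hsplit (n + 2) G).Adj (Sum.inr (i, j)) (Sum.inl a) ↔ (a = i ∨ G.Adj a i) := by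
      intro a; simp [Hsplit]
    have hadj2 : ∀ p : Fin n × Fin (n + 2),
        ¬ (Hsplit (n + 2) G).Adj (Sum.inr (i, j)) (Sum.inr p) := by
      intro p; simp [Hsplit]
    have key : ∑ u ∈ Finset.univ.filter (fun u => (Hsplit (n + 2) G).Adj (Sum.inr (i, j)) u), f u
        = ∑ a : Fin n, (if a = i ∨ G.Adj a i then f (Sum.inl a) else 0) := by
      rw [Finset.sum_filter, Fintype.sum_sum_type]
      simp [hadj1, hadj2]
    have hi' : f (Sum.inl i) = 0 := hi
    have step : ∑ a : Fin n, (if a = i ∨ G.Adj a i then f (Sum.inl a) else 0)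
        ≤ ∑ a : Fin n, (if G.Adj a i then f (Sum.inl a) else 0) := by
      apply Finset.sum_le_sum
      intro a _
      by_cases h1 : a = i
      · subst h1; simp [hi']
      · by_cases h3 : G.Adj a i <;> simp [h1, h3]
    have final : ∑ a : Fin n, (if G.Adj a i then f (Sum.inl a) else 0)
        = ∑ u ∈ Finset.univ.filter (fun u => G.Adj i u), fG u := by
      rw [Finset.sum_filter]
      apply Finset.sum_congr rfl
      intro a _
      rw [G.adj_comm]
    omega
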